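/- arXiv:1701.04166 — 4 statements merged into one kernel-verified Lean document; each statement's English description precedes it below -/
import Mathlib

section
/- Tensor powers of linearly independent unit vectors remain linearly independent: if ψ₁,…,ψ_m are linearly independent vectors in a finite-dimensional complex Hilbert space H, then for every positive integer k the vectors ψ₁^{⊗k},…,ψ_m^{⊗k} in H^{⊗k} are linearly independent. -/
/-!
Over a field, a linearly independent family `v` has a dual family: a linear map `F` to `ι → K`
sending `v i` to the indicator `Pi.single i 1`. Taking products of `F` over the `k` tensor
factors gives a linear map on the tensor power sending `v i ^⊗k` to `(Pi.single i 1) ^ k`, which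
is again `Pi.single i 1` as indicators are idempotent and `k ≠ 0`. The images are linearly
independent, hence so are the tensor powers.
-/

open PiTensorProduct
open scoped TensorProduct

theorem LinearIndependent.exists_linearMap_apply_eq_single {K M ι : Type*} [DivisionRing K]
    [AddCommGroup M] [Module K M] [DecidableEq ι] {v : ι → M} (hv : LinearIndependent K v) :
    ∃ F : M →ₗ[K] ι → K, ∀ i, F (v i) = Pi.single i (1 : K) := by
  obtain ⟨g, hg⟩ := (Finsupp.linearCombination K v).exists_leftInverse_of_injective
    (LinearMap.ker_eq_bot.mpr hv)
  refine ⟨Finsupp.lcoeFun ∘ₗ g, fun i => ?_⟩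
  have hgv : g (v i) = Finsupp.single i 1 := by
    simpa using LinearMap.congr_fun hg (Finsupp.single i 1)
  simp [hgv, Finsupp.single_eq_pi_single]

theorem PiTensorProduct.exists_linearMap_tprod_eq_prod {R M A κ : Type*} [CommSemiring R]
    [AddCommMonoid M] [Module R M] [CommSemiring A] [Algebra R A] [Fintype κ]
    (F : M →ₗ[R] A) :
    ∃ T : (⨂[R] _ : κ, M) →ₗ[R] A, ∀ x : κ → M, T (tprod R x) = ∏ j, F (x j) :=
  ⟨lift ((MultilinearMap.mkPiAlgebra R κ A).compLinearMap fun _ => F), fun x => by simp⟩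

theorem LinearIndependent.tprod_const {K M ι κ : Type*} [Field K] [AddCommGroup M] [Module K M]
    [Fintype κ] [Nonempty κ] {v : ι → M} (hv : LinearIndependent K v) :
    LinearIndependent K fun i => tprod K fun _ : κ => v i := by
  classical
  obtain ⟨F, hF⟩ := hv.exists_linearMap_apply_eq_single
  obtain ⟨T, hT⟩ := exists_linearMap_tprod_eq_prod (κ := κ) F
  have hTv : ∀ i, T (tprod K fun _ : κ => v i) = Pi.single i (1 : K) := fun i => by
    have hidem : IsIdempotentElem (Pi.single i 1 : ι → K) := by
      rw [IsIdempotentElem, ← Pi.single_mul, one_mul]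
    rw [hT, Finset.prod_const, hF, Finset.card_univ, hidem.pow_eq Fintype.card_ne_zero]
  refine LinearIndependent.of_comp T ?_
  simpa only [Function.comp_def, hTv] using Pi.linearIndependent_single_one ι K

theorem tensor_pow_linearIndependent_general {H : Type*} [NormedAddCommGroup H]
    [InnerProductSpace ℂ H] {m : ℕ} (ψ : Fin m → H)
    (h : LinearIndependent ℂ ψ) (k : ℕ) (hk : 0 < k) :
    LinearIndependent ℂ fun j : Fin m =>
      PiTensorProduct.tprod ℂ (fun _ : Fin k => ψ j) :=
  have : Nonempty (Fin k) := Fin.pos_iff_nonempty.mp hk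
  h.tprod_const

/-- Tensor powers of linearly independent vectors remain linearly independent. -/
theorem tensor_pow_linearIndependent {H : Type*} [NormedAddCommGroup H]
    [InnerProductSpace ℂ H] [FiniteDimensional ℂ H] {m : ℕ} (ψ : Fin m → H)
    (h : LinearIndependent ℂ ψ) (k : ℕ) (hk : 0 < k) :
    LinearIndependent ℂ fun j : Fin m =>
      PiTensorProduct.tprod ℂ (fun _ : Fin k => ψ j) :=
  tensor_pow_linearIndependent_general ψ h k hk
end

section
/- No universal linear encoding of an unknown qubit with a fixed state exists: let α, β be nonzero complex numbers with |α|² + |β|² = 1. There is no linear isometry U on ℂ² ⊗ H_A ⊗ H_P, fixed ancilla unit vector Σ ∈ H_A, orthonormal vectors P₀, P₁ ∈ H_P, and positive probability p₀ > 0, such that for every unit vector ψ ∈ ℂ², U(ψ ⊗ Σ ⊗ P₀) = √p₀ · (normalized (αψ + β|0⟩)) ⊗ |0⟩_A ⊗ P₁ + √p₁ · Φ̃(ψ), where Φ̃(ψ) is orthogonal to the subspace ℂ² ⊗ H_A ⊗ span{P₁} and p₀ + p₁ = 1. -/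
/-- Elementary tensor `x ⊗ y ⊗ z` of Euclidean vectors, modeled pointwise. -/
noncomputable def tensor3 {ι κ σ : Type*} (x : EuclideanSpace ℂ ι)
    (y : EuclideanSpace ℂ κ) (z : EuclideanSpace ℂ σ) :
    EuclideanSpace ℂ (ι × κ × σ) :=
  WithLp.toLp 2 (fun q : ι × κ × σ => x q.1 * y q.2.1 * z q.2.2)

/-- Tensor `w ⊗ z` of a vector of the first two factors with a probe vector. -/
noncomputable def tensorLast {ι κ σ : Type*} (w : EuclideanSpace ℂ (ι × κ))
    (z : EuclideanSpace ℂ σ) : EuclideanSpace ℂ (ι × κ × σ) :=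
  WithLp.toLp 2 (fun q : ι × κ × σ => w (q.1, q.2.1) * z q.2.2)

/-!
Contracting the last factor with `P₁` (the adjoint of `w ↦ w ⊗ P₁`) kills `Φ ψ` and leaves the
success branch `√p₀ c(ψ) ‖v ψ‖⁻¹ • v ψ ⊗ a0`, where `v ψ = αψ + β|0⟩`; this branch is linear in `ψ`
because `U` is. Hence the branches of `|1⟩` and `-|1⟩` are opposite, so `v |1⟩ = β|0⟩ + α|1⟩` and
`v (-|1⟩) = β|0⟩ - α|1⟩` would be linearly dependent; they are not, as `αβ ≠ 0`.
-/
section Tensor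

variable {ι κ σ : Type*}

noncomputable def tensorRight (y : EuclideanSpace ℂ κ) :
    EuclideanSpace ℂ ι →ₗ[ℂ] EuclideanSpace ℂ (ι × κ) where
  toFun x := WithLp.toLp 2 fun q => x q.1 * y q.2
  map_add' x x' := by ext q; simp [add_mul]
  map_smul' s x := by ext q; simp [mul_assoc]

noncomputable def tensorLastₗ (z : EuclideanSpace ℂ σ) :
    EuclideanSpace ℂ (ι × κ) →ₗ[ℂ] EuclideanSpace ℂ (ι × κ × σ) where
  toFun w := tensorLast w z
  map_add' w w' := by ext q; simp [tensorLast, add_mul]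
  map_smul' s w := by ext q; simp [tensorLast, mul_assoc]

theorem tensor3_eq_tensorLast (x : EuclideanSpace ℂ ι) (y : EuclideanSpace ℂ κ)
    (z : EuclideanSpace ℂ σ) : tensor3 x y z = tensorLast (tensorRight y x) z :=
  rfl

theorem tensor3_neg_left (x : EuclideanSpace ℂ ι) (y : EuclideanSpace ℂ κ)
    (z : EuclideanSpace ℂ σ) : tensor3 (-x) y z = -tensor3 x y z := by
  ext q
  simp [tensor3]

theorem tensorRight_injective {y : EuclideanSpace ℂ κ} (hy : y ≠ 0) :
    Function.Injective (tensorRight (ι := ι) y) := by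
  obtain ⟨j, hj⟩ : ∃ j, y j ≠ 0 := by
    by_contra! h
    exact hy (by ext j; simpa using h j)
  intro x x' h
  ext i
  exact mul_right_cancel₀ hj congr(($h) (i, j))

variable [Fintype ι] [Fintype κ] [Fintype σ]

open ComplexConjugate in
theorem inner_tensorLast_tensorLast (w w' : EuclideanSpace ℂ (ι × κ))
    (z z' : EuclideanSpace ℂ σ) :
    (inner ℂ (tensorLast w z) (tensorLast w' z') : ℂ) =
      (inner ℂ w w' : ℂ) * (inner ℂ z z' : ℂ) := by
  simp only [tensorLast, PiLp.inner_apply, RCLike.inner_apply, map_mul,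
    Fintype.sum_prod_type, Finset.sum_mul, Finset.mul_sum]
  conv_rhs => rw [Finset.sum_comm]
  refine Finset.sum_congr rfl fun i _ => ?_
  conv_rhs => rw [Finset.sum_comm]
  refine Finset.sum_congr rfl fun k _ => Finset.sum_congr rfl fun s _ => ?_
  ring

noncomputable def contractLast (z : EuclideanSpace ℂ σ) :
    EuclideanSpace ℂ (ι × κ × σ) →ₗ[ℂ] EuclideanSpace ℂ (ι × κ) :=
  LinearMap.adjoint (tensorLastₗ z)

theorem inner_contractLast (z : EuclideanSpace ℂ σ) (w : EuclideanSpace ℂ (ι × κ))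
    (v : EuclideanSpace ℂ (ι × κ × σ)) :
    (inner ℂ w (contractLast z v) : ℂ) = inner ℂ (tensorLast w z) v :=
  LinearMap.adjoint_inner_right _ w v

theorem contractLast_tensorLast {z : EuclideanSpace ℂ σ} (hz : ‖z‖ = 1)
    (u : EuclideanSpace ℂ (ι × κ)) : contractLast z (tensorLast u z) = u :=
  ext_inner_left ℂ fun w => by
    rw [inner_contractLast, inner_tensorLast_tensorLast, inner_self_eq_norm_sq_to_K, hz]
    simp

theorem contractLast_eq_zero {z : EuclideanSpace ℂ σ} {v : EuclideanSpace ℂ (ι × κ × σ)}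
    (hv : ∀ w, (inner ℂ v (tensorLast w z) : ℂ) = 0) : contractLast z v = 0 :=
  ext_inner_left ℂ fun w => by
    rw [inner_contractLast, ← inner_conj_symm, hv, map_zero, inner_zero_right]

end Tensor

theorem linearIndependent_single_one_zero :
    LinearIndependent ℂ ![EuclideanSpace.single (1 : Fin 2) (1 : ℂ),
      EuclideanSpace.single (0 : Fin 2) (1 : ℂ)] := by
  refine LinearIndependent.pair_iff.mpr fun s t h => ⟨?_, ?_⟩
  · simpa using congr(($h) 1)
  · simpa using congr(($h) 0)

theorem no_encoding_general {a p : ℕ} (α β : ℂ) (hα : α ≠ 0) (hβ : β ≠ 0) :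
    ¬ ∃ (U : EuclideanSpace ℂ (Fin 2 × Fin a × Fin p) →ₗᵢ[ℂ]
          EuclideanSpace ℂ (Fin 2 × Fin a × Fin p))
        (anc : EuclideanSpace ℂ (Fin a)) (P₀ P₁ : EuclideanSpace ℂ (Fin p))
        (a0 : EuclideanSpace ℂ (Fin a)) (p₀ p₁ : ℝ)
        (Φ : EuclideanSpace ℂ (Fin 2) → EuclideanSpace ℂ (Fin 2 × Fin a × Fin p))
        (c : EuclideanSpace ℂ (Fin 2) → ℂ),
      ‖anc‖ = 1 ∧ ‖P₀‖ = 1 ∧ ‖P₁‖ = 1 ∧ (inner ℂ P₀ P₁ : ℂ) = 0 ∧ ‖a0‖ = 1 ∧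
      0 < p₀ ∧ p₀ + p₁ = 1 ∧
      (∀ ψ (w : EuclideanSpace ℂ (Fin 2 × Fin a)),
        (inner ℂ (Φ ψ) (tensorLast w P₁) : ℂ) = 0) ∧
      (∀ ψ : EuclideanSpace ℂ (Fin 2), ‖ψ‖ = 1 →
        ‖c ψ‖ = 1 ∧
        α • ψ + β • EuclideanSpace.single (0 : Fin 2) (1 : ℂ) ≠ 0 ∧
        U (tensor3 ψ anc P₀) = c ψ •
          (Real.sqrt p₀ •
            tensor3 ((‖α • ψ + β • EuclideanSpace.single (0 : Fin 2) (1 : ℂ)‖⁻¹ : ℝ) •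
              (α • ψ + β • EuclideanSpace.single (0 : Fin 2) (1 : ℂ))) a0 P₁
           + Real.sqrt p₁ • Φ ψ)) := by
  rintro ⟨U, anc, P₀, P₁, a0, p₀, p₁, Φ, c, -, -, hP₁, -, ha0, hp₀, -, hΦ, hU⟩
  set e0 := EuclideanSpace.single (0 : Fin 2) (1 : ℂ)
  set e1 := EuclideanSpace.single (1 : Fin 2) (1 : ℂ)
  set v : EuclideanSpace ℂ (Fin 2) → EuclideanSpace ℂ (Fin 2) := fun ψ => α • ψ + β • e0
  set amp : EuclideanSpace ℂ (Fin 2) → ℂ := fun ψ => c ψ * Real.sqrt p₀ * (‖v ψ‖⁻¹ : ℝ)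
  have hsuccess : ∀ ψ, ‖ψ‖ = 1 →
      contractLast P₁ (U (tensor3 ψ anc P₀)) = tensorRight a0 (amp ψ • v ψ) := by
    intro ψ hψ
    simp only [(hU ψ hψ).2.2, ← Complex.coe_smul]
    rw [map_smul, map_add, map_smul, map_smul, tensor3_eq_tensorLast,
      contractLast_tensorLast hP₁, contractLast_eq_zero (hΦ ψ), smul_zero, add_zero,
      map_smul, map_smul, smul_smul, smul_smul]
  have he1 : ‖e1‖ = 1 := by simp [e1]
  have hcomb : amp e1 • v e1 + amp (-e1) • v (-e1) = 0 := by
    apply tensorRight_injective (y := a0) (ι := Fin 2) (by rintro rfl; simp at ha0)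
    rw [map_add, map_zero, ← hsuccess e1 he1, ← hsuccess (-e1) (by rwa [norm_neg]),
      tensor3_neg_left, map_neg, map_neg, add_neg_cancel]
  have hind : LinearIndependent ℂ ![v e1, v (-e1)] := by
    simp only [v, smul_neg, ← neg_smul]
    rw [LinearIndependent.pair_add_smul_add_smul_iff]
    refine ⟨linearIndependent_single_one_zero, fun h => ?_⟩
    have : 2 * (α * β) = 0 := by linear_combination h
    simp [hα, hβ] at this
  have hamp : amp (-e1) ≠ 0 := by
    obtain ⟨hc, hv, -⟩ := hU (-e1) (by rwa [norm_neg])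
    have hc0 : c (-e1) ≠ 0 := norm_ne_zero_iff.mp (by rw [hc]; exact one_ne_zero)
    refine mul_ne_zero (mul_ne_zero hc0 ?_) ?_ <;> rw [Complex.ofReal_ne_zero]
    · exact (Real.sqrt_pos.mpr hp₀).ne'
    · exact inv_ne_zero (norm_ne_zero_iff.mpr hv)
  exact hamp (LinearIndependent.pair_iff.mp hind _ _ hcomb).2

/-- No-encoding theorem: no universal linear isometry can linearly superpose an
unknown qubit state with the fixed state `|0⟩`, succeeding with probability
`p₀ > 0` for every unit input (up to a global phase on the output). -/
theorem no_encoding {a p : ℕ} (α β : ℂ) (hα : α ≠ 0) (hβ : β ≠ 0)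
    (hnorm : ‖α‖ ^ 2 + ‖β‖ ^ 2 = 1) :
    ¬ ∃ (U : EuclideanSpace ℂ (Fin 2 × Fin a × Fin p) →ₗᵢ[ℂ]
          EuclideanSpace ℂ (Fin 2 × Fin a × Fin p))
        (anc : EuclideanSpace ℂ (Fin a)) (P₀ P₁ : EuclideanSpace ℂ (Fin p))
        (a0 : EuclideanSpace ℂ (Fin a)) (p₀ p₁ : ℝ)
        (Φ : EuclideanSpace ℂ (Fin 2) → EuclideanSpace ℂ (Fin 2 × Fin a × Fin p))
        (c : EuclideanSpace ℂ (Fin 2) → ℂ),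
      ‖anc‖ = 1 ∧ ‖P₀‖ = 1 ∧ ‖P₁‖ = 1 ∧ (inner ℂ P₀ P₁ : ℂ) = 0 ∧ ‖a0‖ = 1 ∧
      0 < p₀ ∧ p₀ + p₁ = 1 ∧
      (∀ ψ (w : EuclideanSpace ℂ (Fin 2 × Fin a)),
        (inner ℂ (Φ ψ) (tensorLast w P₁) : ℂ) = 0) ∧
      (∀ ψ : EuclideanSpace ℂ (Fin 2), ‖ψ‖ = 1 →
        ‖c ψ‖ = 1 ∧
        α • ψ + β • EuclideanSpace.single (0 : Fin 2) (1 : ℂ) ≠ 0 ∧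
        U (tensor3 ψ anc P₀) = c ψ •
          (Real.sqrt p₀ •
            tensor3 ((‖α • ψ + β • EuclideanSpace.single (0 : Fin 2) (1 : ℂ)‖⁻¹ : ℝ) •
              (α • ψ + β • EuclideanSpace.single (0 : Fin 2) (1 : ℂ))) a0 P₁
           + Real.sqrt p₁ • Φ ψ)) :=
  no_encoding_general α β hα hβ
end

section
/- Phase covariance forbids universal superposition with a fixed component: let α, β be complex with αβ ≠ 0 and |α|² + |β|² = 1, and Φ a fixed unit vector in H^{⊗n}. Suppose a linear map U on H^{⊗k} ⊗ H_A ⊗ H_P satisfies, for some unit vector φ ∈ H and all phases θ, that U((e^{iθ}φ)^{⊗k} ⊗ Σ ⊗ P₀) is proportional (nonzero scalar multiple) to √p₀·r(θ)^{1/2}(α e^{i n θ} φ^{⊗n} + β Φ) ⊗ w ⊗ P₁ + √p₁·Φ̃(θ) with Φ̃(θ) ⊥ (H^{⊗n} ⊗ H_A' ⊗ span{P₁}), p₀ > 0, and also U((e^{iθ}φ)^{⊗k} ⊗ Σ ⊗ P₀) = e^{ikθ} U(φ^{⊗k} ⊗ Σ ⊗ P₀). Then for all θ, the vectors α e^{inθ}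 φ^{⊗n} + β Φ and α φ^{⊗n} + β Φ are proportional, which forces β = 0 when φ^{⊗n} and Φ are linearly independent — a contradiction. -/
/-- The `n`-fold tensor power `φ^{⊗n}` of a Euclidean vector, modeled pointwise. -/
noncomputable def tpow {d : ℕ} (n : ℕ) (φ : EuclideanSpace ℂ (Fin d)) :
    EuclideanSpace ℂ (Fin n → Fin d) :=
  WithLp.toLp 2 (fun f : Fin n → Fin d => ∏ i, φ (f i))

/-!
Compare the outputs at the phases `θ = π / n` and `0` through phase covariance and project
onto the success subspace `· ⊗ w ⊗ P₁`, which annihilates `Φ̃`: this makes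
`-α φ^{⊗n} + β Φ` a multiple of `α φ^{⊗n} + β Φ`. As `φ^{⊗n}` and `Φ` are linearly
independent and `β ≠ 0`, the factor is `1`, so `α = -α`.
-/

open scoped ComplexConjugate

noncomputable def tensor2 {ι κ : Type*} (y : EuclideanSpace ℂ ι) (v : EuclideanSpace ℂ κ) :
    EuclideanSpace ℂ (ι × κ) :=
  WithLp.toLp 2 (fun q : ι × κ => y q.1 * v q.2)

section Tensor

variable {ι κ σ : Type*} [Fintype ι] [Fintype κ] [Fintype σ]

theorem inner_tensor3_tensorLast_tensor2 (u y : EuclideanSpace ℂ ι) (z v : EuclideanSpace ℂ κ)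
    (P Q : EuclideanSpace ℂ σ) :
    inner ℂ (tensor3 u z P) (tensorLast (tensor2 y v) Q) =
      inner ℂ u y * inner ℂ z v * inner ℂ P Q := by
  simp only [PiLp.inner_apply, RCLike.inner_apply, tensor3, tensorLast, tensor2, PiLp.toLp_apply,
    Fintype.sum_prod_type, map_mul]
  rw [Finset.sum_mul_sum, Finset.sum_mul_sum]
  simp only [Finset.sum_mul]
  refine Finset.sum_congr rfl fun i _ => Finset.sum_comm.trans ?_
  exact Finset.sum_congr rfl fun j _ => Finset.sum_congr rfl fun s _ => by ring

theorem eq_div_smul_of_tensor3_add_eq {w : EuclideanSpace ℂ κ} {P : EuclideanSpace ℂ σ}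
    (hw : w ≠ 0) (hP : P ≠ 0) {a a' : ℂ} (ha : a ≠ 0) {X X' : EuclideanSpace ℂ ι}
    {Ψ Ψ' : EuclideanSpace ℂ (ι × κ × σ)}
    (hΨ : ∀ v, inner ℂ Ψ (tensorLast v P) = 0) (hΨ' : ∀ v, inner ℂ Ψ' (tensorLast v P) = 0)
    (h : a • tensor3 X w P + Ψ = a' • tensor3 X' w P + Ψ') :
    X = (a' / a) • X' := by
  refine ext_inner_right ℂ fun y => ?_
  have hy := congrArg
    (fun v : EuclideanSpace ℂ (ι × κ × σ) => inner ℂ v (tensorLast (tensor2 y w) P)) h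
  simp only [inner_add_left, inner_smul_left, hΨ, hΨ', inner_tensor3_tensorLast_tensor2,
    add_zero] at hy
  have hww : inner ℂ w w ≠ 0 := inner_self_ne_zero.mpr hw
  have hPP : inner ℂ P P ≠ 0 := inner_self_ne_zero.mpr hP
  have ha' : conj a ≠ 0 := (map_ne_zero _).mpr ha
  rw [inner_smul_left, map_div₀, div_mul_eq_mul_div, eq_div_iff ha']
  apply mul_right_cancel₀ (mul_ne_zero hww hPP)
  linear_combination hy

end Tensor

theorem LinearIndependent.eq_of_add_smul_eq_smul {K V : Type*} [Field K] [AddCommGroup V]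
    [Module K V] {x y : V} (h : LinearIndependent K ![x, y]) {a a' b μ : K} (hb : b ≠ 0)
    (hxy : a • x + b • y = μ • (a' • x + b • y)) : a = a' := by
  rw [smul_add, smul_smul, smul_smul] at hxy
  obtain ⟨hx, hy⟩ := h.eq_of_pair hxy
  obtain rfl : μ = 1 := by
    have : (μ - 1) * b = 0 := by linear_combination -hy
    simpa [sub_eq_zero, hb] using this
  simpa using hx

theorem phase_covariance_no_fixed_component_general {d k n a a' p : ℕ}
    (φ : EuclideanSpace ℂ (Fin d))
    (anc : EuclideanSpace ℂ (Fin a))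
    (P₀ P₁ : EuclideanSpace ℂ (Fin p)) (hP₁ : ‖P₁‖ = 1)
    (w : EuclideanSpace ℂ (Fin a')) (hw : ‖w‖ = 1)
    (Φ : EuclideanSpace ℂ (Fin n → Fin d))
    (hlin : LinearIndependent ℂ ![tpow n φ, Φ])
    (α β : ℂ) (hα : α ≠ 0) (hβ : β ≠ 0)
    (p₀ p₁ : ℝ) (hp₀ : 0 < p₀)
    (r : ℝ → ℝ) (hr : ∀ θ, 0 < r θ)
    (Φt : ℝ → EuclideanSpace ℂ ((Fin n → Fin d) × Fin a' × Fin p))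
    (U : EuclideanSpace ℂ ((Fin k → Fin d) × Fin a × Fin p) →ₗ[ℂ]
      EuclideanSpace ℂ ((Fin n → Fin d) × Fin a' × Fin p))
    (horth : ∀ θ (v : EuclideanSpace ℂ ((Fin n → Fin d) × Fin a')),
      (inner ℂ (Φt θ) (tensorLast v P₁) : ℂ) = 0)
    (hmain : ∀ θ : ℝ, ∃ c : ℂ, c ≠ 0 ∧
      U (tensor3 (tpow k (Complex.exp (θ * Complex.I) • φ)) anc P₀) =
        c • (Real.sqrt p₀ • Real.sqrt (r θ) •
            tensor3 ((α * Complex.exp ((n : ℂ) * θ * Complex.I)) • tpow n φ + β • Φ)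
              w P₁
          + Real.sqrt p₁ • Φt θ))
    (hphase : ∀ θ : ℝ,
      U (tensor3 (tpow k (Complex.exp (θ * Complex.I) • φ)) anc P₀) =
        Complex.exp ((k : ℂ) * θ * Complex.I) •
          U (tensor3 (tpow k φ) anc P₀)) :
    False := by
  have hn : n ≠ 0 := by
    rintro rfl
    simpa [finrank_euclideanSpace] using hlin.fintype_card_le_finrank
  set θ : ℝ := Real.pi / n
  have hflip : Complex.exp ((n : ℂ) * θ * Complex.I) = -1 := by
    simp only [θ]
    push_cast
    field_simp
    exact Complex.exp_pi_mul_I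
  obtain ⟨c, hc, hUθ⟩ := hmain θ
  obtain ⟨c₀, -, hU₀⟩ := hmain 0
  simp only [Complex.ofReal_zero, mul_zero, zero_mul, Complex.exp_zero, one_smul, mul_one]
    at hU₀
  set e := Complex.exp ((k : ℂ) * θ * Complex.I)
  have hcov := (hphase θ).symm.trans hUθ
  rw [hU₀] at hcov
  have hsqrt : ∀ {x : ℝ}, 0 < x → (Real.sqrt x : ℂ) ≠ 0 := fun hx =>
    Complex.ofReal_ne_zero.mpr (Real.sqrt_pos.mpr hx).ne'
  have hfail : ∀ θ (z : ℂ) v, inner ℂ (z • Φt θ) (tensorLast v P₁) = 0 := fun θ z v => by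
    rw [inner_smul_left, horth, mul_zero]
  have hprop := eq_div_smul_of_tensor3_add_eq (norm_ne_zero_iff.mp (hw.trans_ne one_ne_zero))
    (norm_ne_zero_iff.mp (hP₁.trans_ne one_ne_zero))
    (mul_ne_zero (mul_ne_zero hc (hsqrt hp₀)) (hsqrt (hr θ)))
    (a' := e * c₀ * Real.sqrt p₀ * Real.sqrt (r 0))
    (hfail θ (c * Real.sqrt p₁)) (hfail 0 (e * c₀ * Real.sqrt p₁))
    (by convert hcov.symm using 1 <;> module)
  rw [hflip] at hprop
  have hα_neg : α * -1 = α := hlin.eq_of_add_smul_eq_smul hβ hprop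
  exact hα (by linear_combination -hα_neg / 2)

/-- Phase covariance forbids universal superposition with a fixed component:
if the output of a linear map on `(e^{iθ}φ)^{⊗k} ⊗ Σ ⊗ P₀` is proportional to
`√p₀ √(r θ) (α e^{inθ} φ^{⊗n} + β Φ) ⊗ w ⊗ P₁ + √p₁ Φ̃(θ)` for all phases `θ`,
with `Φ̃(θ)` orthogonal to the success subspace and `αβ ≠ 0`, while the map is
also phase-covariant, then a contradiction arises when `φ^{⊗n}` and `Φ` are
linearly independent. -/
theorem phase_covariance_no_fixed_component {d k n a a' p : ℕ} (hd : 2 ≤ d)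
    (φ : EuclideanSpace ℂ (Fin d)) (hφ : ‖φ‖ = 1)
    (anc : EuclideanSpace ℂ (Fin a)) (hanc : ‖anc‖ = 1)
    (P₀ P₁ : EuclideanSpace ℂ (Fin p)) (hP₀ : ‖P₀‖ = 1) (hP₁ : ‖P₁‖ = 1)
    (hP : (inner ℂ P₀ P₁ : ℂ) = 0)
    (w : EuclideanSpace ℂ (Fin a')) (hw : ‖w‖ = 1)
    (Φ : EuclideanSpace ℂ (Fin n → Fin d)) (hΦ : ‖Φ‖ = 1)
    (hlin : LinearIndependent ℂ ![tpow n φ, Φ])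
    (α β : ℂ) (hα : α ≠ 0) (hβ : β ≠ 0) (hnorm : ‖α‖ ^ 2 + ‖β‖ ^ 2 = 1)
    (p₀ p₁ : ℝ) (hp₀ : 0 < p₀) (hp : p₀ + p₁ = 1)
    (r : ℝ → ℝ) (hr : ∀ θ, 0 < r θ)
    (Φt : ℝ → EuclideanSpace ℂ ((Fin n → Fin d) × Fin a' × Fin p))
    (U : EuclideanSpace ℂ ((Fin k → Fin d) × Fin a × Fin p) →ₗ[ℂ]
      EuclideanSpace ℂ ((Fin n → Fin d) × Fin a' × Fin p))
    (horth : ∀ θ (v : EuclideanSpace ℂ ((Fin n → Fin d) × Fin a')),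
      (inner ℂ (Φt θ) (tensorLast v P₁) : ℂ) = 0)
    (hmain : ∀ θ : ℝ, ∃ c : ℂ, c ≠ 0 ∧
      U (tensor3 (tpow k (Complex.exp (θ * Complex.I) • φ)) anc P₀) =
        c • (Real.sqrt p₀ • Real.sqrt (r θ) •
            tensor3 ((α * Complex.exp ((n : ℂ) * θ * Complex.I)) • tpow n φ + β • Φ)
              w P₁
          + Real.sqrt p₁ • Φt θ))
    (hphase : ∀ θ : ℝ,
      U (tensor3 (tpow k (Complex.exp (θ * Complex.I) • φ)) anc P₀) =
        Complex.exp ((k : ℂ) * θ * Complex.I) •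
          U (tensor3 (tpow k φ) anc P₀)) :
    False :=
  phase_covariance_no_fixed_component_general φ anc P₀ P₁ hP₁ w hw Φ hlin α β hα hβ p₀ p₁ hp₀ r hr
    Φt U horth hmain hphase
end

section
/- For unit vectors ψ_i, ψ_j in a complex Hilbert space with overlap a_{ij} = ⟨ψ_i, ψ_j⟩, define D_{ij,t} = 2(1 − |a_{ij}|^t). Suppose nonnegative reals p_{is}, q_{iℓ} with Σ_s p_{is} + Σ_ℓ q_{iℓ} = 1 for each i, complex numbers α_{is}, β_{is} with |α_{is}|² + |β_{is}|² = 1, positive reals r_{is}, and complex λ_{ij,s} satisfy |a_{ij}|^k ≤ Σ_s √(p_{is}p_{js})(√(r_{is}r_{js})|α_{is}α_{js}||a_{ij}|^s + |α_{is}β_{js}λ_{ij,s}| + |β_{is}α_{js}λ_{ji,s}| + |β_{is}β_{js}|) + Σ_ℓ √(q_{iℓ}q_{jℓ}). Then D_{ij,k} ≥ Σ_s p̄_{ij,s}[ᾱ_{ij,s}(r̄_{ij,s} D_{ij,s}²/2 − 2r̄_{ij,s} + 2) − 2 max{|λ_{ij,s}|, |λ_{ji,s}|}] where p̄_{ij,s}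 = (p_{is}+p_{js})/2, ᾱ_{ij,s} = |α_{is}α_{js}|, r̄_{ij,s} = √(r_{is}r_{js}). -/
open Finset

/-!
Bound each success-branch weight `√(p_{is} p_{js})` and each failure-branch weight
`√(q_{iℓ} q_{jℓ})` by the arithmetic mean; by normalisation the failure branches then contribute at
most `1 - Σ_s p̄_{ij,s}`. Inside a success branch, Cauchy–Schwarz on the unit vectors
`(|α_{is}|, |β_{is}|)` and `(|α_{js}|, |β_{js}|)` bounds the cross terms by `max |λ|` and the
`ββ` term by `1 - |α_{is} α_{js}|`. What remains is the pointwise inequality between the resulting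
linear expression in `x = |a_{ij}|^s` and the quadratic one in `D_{ij,s} = 2(1 - x)`, which holds
because `0 ≤ x ≤ 1` for unit vectors.
-/

theorem Real.sqrt_mul_le_add_div_two {x y : ℝ} (hx : 0 ≤ x) (hy : 0 ≤ y) :
    √(x * y) ≤ (x + y) / 2 :=
  Real.sqrt_le_iff.mpr ⟨by linarith, by nlinarith [sq_nonneg (x - y)]⟩

theorem mul_add_mul_le_one_of_sq_add_sq_eq_one {a b c d : ℝ}
    (hab : a ^ 2 + b ^ 2 = 1) (hcd : c ^ 2 + d ^ 2 = 1) : a * c + b * d ≤ 1 := by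
  nlinarith [sq_nonneg (a - c), sq_nonneg (b - d)]

theorem sum_sqrt_mul_le_one_sub {ι κ : Type*} (s : Finset ι) (t : Finset κ) {p p' : ι → ℝ}
    {q q' : κ → ℝ} (hq : ∀ l, 0 ≤ q l) (hq' : ∀ l, 0 ≤ q' l)
    (hsum : ∑ i ∈ s, p i + ∑ l ∈ t, q l = 1) (hsum' : ∑ i ∈ s, p' i + ∑ l ∈ t, q' l = 1) :
    ∑ l ∈ t, √(q l * q' l) ≤ 1 - ∑ i ∈ s, (p i + p' i) / 2 := by
  have hamgm : ∑ l ∈ t, √(q l * q' l) ≤ ∑ l ∈ t, (q l + q' l) / 2 :=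
    sum_le_sum fun l _ => Real.sqrt_mul_le_add_div_two (hq l) (hq' l)
  simp only [← sum_div, sum_add_distrib] at hamgm ⊢
  linarith

section SuccessBranch

/- `a, b, c, d` play the roles of `|α_{is}|, |β_{is}|, |α_{js}|, |β_{js}|`, `r` of `r̄_{ij,s}` and
`x` of `|a_{ij}|^s`. -/
variable {a b c d r x lam lam' : ℝ}

theorem cross_terms_le_max_add_one_sub (ha : 0 ≤ a) (hb : 0 ≤ b) (hc : 0 ≤ c) (hd : 0 ≤ d)
    (hab : a ^ 2 + b ^ 2 = 1) (hcd : c ^ 2 + d ^ 2 = 1) (hlam : 0 ≤ lam) :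
    a * d * lam + b * c * lam' + b * d ≤ max lam lam' + 1 - a * c := by
  have hcross : a * d + b * c ≤ 1 := mul_add_mul_le_one_of_sq_add_sq_eq_one hab (by linarith)
  have hdiag : a * c + b * d ≤ 1 := mul_add_mul_le_one_of_sq_add_sq_eq_one hab hcd
  have hmax : a * d * lam + b * c * lam' ≤ (a * d + b * c) * max lam lam' := by
    rw [add_mul]
    gcongr
    exacts [le_max_left _ _, le_max_right _ _]
  nlinarith [le_trans hlam (le_max_left lam lam')]

theorem sqrt_mul_mul_successTerm_le {p p' : ℝ} (hp : 0 ≤ p) (hp' : 0 ≤ p')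
    (ha : 0 ≤ a) (hb : 0 ≤ b) (hc : 0 ≤ c) (hd : 0 ≤ d)
    (hab : a ^ 2 + b ^ 2 = 1) (hcd : c ^ 2 + d ^ 2 = 1) (hr : 0 ≤ r) (hx : 0 ≤ x)
    (hlam : 0 ≤ lam) (hlam' : 0 ≤ lam') :
    √(p * p') * (r * (a * c) * x + a * d * lam + b * c * lam' + b * d) ≤
      (p + p') / 2 * (r * (a * c) * x + max lam lam' + 1 - a * c) := by
  have hcross := cross_terms_le_max_add_one_sub ha hb hc hd hab hcd hlam (lam' := lam')
  calc √(p * p') * (r * (a * c) * x + a * d * lam + b * c * lam' + b * d)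
      ≤ (p + p') / 2 * (r * (a * c) * x + a * d * lam + b * c * lam' + b * d) := by
        gcongr
        exact Real.sqrt_mul_le_add_div_two hp hp'
    _ ≤ (p + p') / 2 * (r * (a * c) * x + max lam lam' + 1 - a * c) := by
        gcongr
        linarith

/-- The slack is `2 w r α x (1 - x)`. -/
theorem metric_term_add_two_mul_le {w α M : ℝ} (hw : 0 ≤ w) (hα : 0 ≤ α) (hr : 0 ≤ r)
    (hx₀ : 0 ≤ x) (hx₁ : x ≤ 1) :
    w * (α * (r * (2 * (1 - x)) ^ 2 / 2 - 2 * r + 2) - 2 * M) +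
        2 * (w * (r * α * x + M + 1 - α)) ≤ 2 * w := by
  have hslack : 0 ≤ w * r * α * x * (1 - x) := by
    have : 0 ≤ 1 - x := by linarith
    positivity
  nlinarith

end SuccessBranch

theorem cloning_metric_bound_general {E : Type*} [NormedAddCommGroup E]
    [InnerProductSpace ℂ E] (ψi ψj : E) (hψi : ‖ψi‖ = 1) (hψj : ‖ψj‖ = 1)
    (k S L : ℕ)
    (pI pJ qI qJ : ℕ → ℝ)
    (hpI : ∀ s, 0 ≤ pI s) (hpJ : ∀ s, 0 ≤ pJ s)
    (hqI : ∀ l, 0 ≤ qI l) (hqJ : ∀ l, 0 ≤ qJ l)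
    (hsumI : (∑ s ∈ range S, pI s) + (∑ l ∈ range L, qI l) = 1)
    (hsumJ : (∑ s ∈ range S, pJ s) + (∑ l ∈ range L, qJ l) = 1)
    (αI αJ βI βJ : ℕ → ℂ)
    (hαI : ∀ s, ‖αI s‖ ^ 2 + ‖βI s‖ ^ 2 = 1)
    (hαJ : ∀ s, ‖αJ s‖ ^ 2 + ‖βJ s‖ ^ 2 = 1)
    (rI rJ : ℕ → ℝ)
    (lamIJ lamJI : ℕ → ℂ)
    (hmain : ‖(inner ℂ ψi ψj : ℂ)‖ ^ k ≤
      (∑ s ∈ range S, Real.sqrt (pI s * pJ s) *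
        (Real.sqrt (rI s * rJ s) * (‖αI s‖ * ‖αJ s‖) *
            ‖(inner ℂ ψi ψj : ℂ)‖ ^ (s + 1)
          + ‖αI s‖ * ‖βJ s‖ * ‖lamIJ s‖
          + ‖βI s‖ * ‖αJ s‖ * ‖lamJI s‖
          + ‖βI s‖ * ‖βJ s‖)) +
      ∑ l ∈ range L, Real.sqrt (qI l * qJ l)) :
    (∑ s ∈ range S, ((pI s + pJ s) / 2) *
        ((‖αI s‖ * ‖αJ s‖) *
            (Real.sqrt (rI s * rJ s) * (2 * (1 - ‖(inner ℂ ψi ψj : ℂ)‖ ^ (s + 1))) ^ 2 / 2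
              - 2 * Real.sqrt (rI s * rJ s) + 2)
          - 2 * max ‖lamIJ s‖ ‖lamJI s‖)) ≤
      2 * (1 - ‖(inner ℂ ψi ψj : ℂ)‖ ^ k) := by
  set A := ‖(inner ℂ ψi ψj : ℂ)‖
  have hA₁ : A ≤ 1 := by simpa [hψi, hψj] using norm_inner_le_norm (𝕜 := ℂ) ψi ψj
  have hsuccess := sum_le_sum fun s (_ : s ∈ range S) =>
    sqrt_mul_mul_successTerm_le (hpI s) (hpJ s) (norm_nonneg (αI s)) (norm_nonneg (βI s))
      (norm_nonneg (αJ s)) (norm_nonneg (βJ s)) (hαI s) (hαJ s) (Real.sqrt_nonneg (rI s * rJ s))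
      (pow_nonneg (norm_nonneg _) (s + 1) : 0 ≤ A ^ (s + 1))
      (norm_nonneg (lamIJ s)) (norm_nonneg (lamJI s))
  have hfailure := sum_sqrt_mul_le_one_sub (range S) (range L) hqI hqJ hsumI hsumJ
  have htermwise := sum_le_sum fun s (_ : s ∈ range S) =>
    metric_term_add_two_mul_le (M := max ‖lamIJ s‖ ‖lamJI s‖)
      (by linarith [hpI s, hpJ s] : 0 ≤ (pI s + pJ s) / 2)
      (by positivity : 0 ≤ ‖αI s‖ * ‖αJ s‖) (Real.sqrt_nonneg (rI s * rJ s))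
      (pow_nonneg (norm_nonneg _) (s + 1) : 0 ≤ A ^ (s + 1)) (pow_le_one₀ (norm_nonneg _) hA₁)
  simp only [sum_add_distrib, ← mul_sum] at htermwise
  linarith

/-- Entrywise efficiency bound for probabilistic cloning-type transformations:
from the inner-product consistency inequality one derives the metric bound on
`D_{ij,k} = 2(1 − |⟨ψᵢ,ψⱼ⟩|^k)`. -/
theorem cloning_metric_bound {E : Type*} [NormedAddCommGroup E]
    [InnerProductSpace ℂ E] (ψi ψj : E) (hψi : ‖ψi‖ = 1) (hψj : ‖ψj‖ = 1)
    (k S L : ℕ)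
    (pI pJ qI qJ : ℕ → ℝ)
    (hpI : ∀ s, 0 ≤ pI s) (hpJ : ∀ s, 0 ≤ pJ s)
    (hqI : ∀ l, 0 ≤ qI l) (hqJ : ∀ l, 0 ≤ qJ l)
    (hsumI : (∑ s ∈ range S, pI s) + (∑ l ∈ range L, qI l) = 1)
    (hsumJ : (∑ s ∈ range S, pJ s) + (∑ l ∈ range L, qJ l) = 1)
    (αI αJ βI βJ : ℕ → ℂ)
    (hαI : ∀ s, ‖αI s‖ ^ 2 + ‖βI s‖ ^ 2 = 1)
    (hαJ : ∀ s, ‖αJ s‖ ^ 2 + ‖βJ s‖ ^ 2 = 1)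
    (rI rJ : ℕ → ℝ) (hrI : ∀ s, 0 < rI s) (hrJ : ∀ s, 0 < rJ s)
    (lamIJ lamJI : ℕ → ℂ)
    (hmain : ‖(inner ℂ ψi ψj : ℂ)‖ ^ k ≤
      (∑ s ∈ range S, Real.sqrt (pI s * pJ s) *
        (Real.sqrt (rI s * rJ s) * (‖αI s‖ * ‖αJ s‖) *
            ‖(inner ℂ ψi ψj : ℂ)‖ ^ (s + 1)
          + ‖αI s‖ * ‖βJ s‖ * ‖lamIJ s‖
          + ‖βI s‖ * ‖αJ s‖ * ‖lamJI s‖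
          + ‖βI s‖ * ‖βJ s‖)) +
      ∑ l ∈ range L, Real.sqrt (qI l * qJ l)) :
    (∑ s ∈ range S, ((pI s + pJ s) / 2) *
        ((‖αI s‖ * ‖αJ s‖) *
            (Real.sqrt (rI s * rJ s) * (2 * (1 - ‖(inner ℂ ψi ψj : ℂ)‖ ^ (s + 1))) ^ 2 / 2
              - 2 * Real.sqrt (rI s * rJ s) + 2)
          - 2 * max ‖lamIJ s‖ ‖lamJI s‖)) ≤
      2 * (1 - ‖(inner ℂ ψi ψj : ℂ)‖ ^ k) :=
  cloning_metric_bound_general ψi ψj hψi hψj k S L pI pJ qI qJ hpI hpJ hqI hqJ hsumI hsumJ αI αJ βI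
    βJ hαI hαJ rI rJ lamIJ lamJI hmain
end
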